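/- Let A ∈ ℝ^{n×n}, B ∈ ℝ^{n×m}, τ > 0, N ≥ 1 an integer, h = τ/N, a = |A|, b = |B|. Let u ∈ L^∞([0,τ]; ℝ^m) with ‖u‖ = sup_{0≤s<τ}|u(s)|, let x(t) solve ẋ = Ax + Bu with x(0) = x₀, and define the Euler iterates x_{j+1} = (I + hA)x_j + B∫_{jh}^{(j+1)h} u(s)ds for j = 0,…,N−1 with x_0 = x(0). Then |x_N − x(τ)| ≤ (h/2)·a·(exp(aτ) − 1)·exp(aτ)·|x(0)| + (h/2)·b·(a·τ·exp(aτ) + 1)·(exp(aτ) − 1)·‖u‖. -/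

import Mathlib

/-!
By Grönwall, `‖x'‖ ≤ L := (‖A‖ ‖x 0‖ + ‖B‖ U) exp (‖A‖ τ)` on `[0, τ)`, so `x` is `L`-Lipschitz.
Integrating the equation over one step `[c, c + h]` shows that the Euler step started at the exact
value `x c` misses `x (c + h)` by exactly `A (∫ (x s - x c))`, of norm at most `‖A‖ L h² / 2`;
the step map itself amplifies an error by at most `1 + h ‖A‖`. The discrete Grönwall recursion
`e (j + 1) ≤ (1 + h ‖A‖) e j + h ‖A‖ (L h / 2)` with `e 0 = 0` gives
`e N ≤ (L h / 2) ((1 + h ‖A‖) ^ N - 1) ≤ (L h / 2) (exp (‖A‖ τ) - 1)`, and the stated bound is this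
one weakened by `exp y ≤ y exp y + 1`.
-/

open MeasureTheory Real Set

lemma exp_le_mul_exp_add_one (y : ℝ) : exp y ≤ y * exp y + 1 := by
  have h := mul_le_mul_of_nonneg_right (add_one_le_exp (-y)) (exp_pos y).le
  rw [add_mul, ← exp_add, neg_add_cancel, exp_zero] at h
  linarith

lemma one_add_pow_le_exp_mul {k : ℝ} (hk : 0 ≤ 1 + k) (N : ℕ) : (1 + k) ^ N ≤ exp (N * k) := by
  rw [exp_nat_mul]
  exact pow_le_pow_left₀ hk (by linarith [add_one_le_exp k]) N

lemma mul_gronwallBound_add (δ K ε x : ℝ) :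
    K * gronwallBound δ K ε x + ε = (K * δ + ε) * exp (K * x) := by
  rcases eq_or_ne K 0 with rfl | hK
  · simp
  · rw [gronwallBound_of_K_ne_0 hK]
    field_simp
    ring

lemma norm_integral_sub_le_of_norm_sub_le {E : Type*} [NormedAddCommGroup E] [NormedSpace ℝ E]
    {x : ℝ → E} {c d L : ℝ} (hcd : c ≤ d) (hL : ∀ t ∈ Icc c d, ‖x t - x c‖ ≤ L * (t - c)) :
    ‖∫ t in c..d, (x t - x c)‖ ≤ L * (d - c) ^ 2 / 2 := by
  calc ‖∫ t in c..d, (x t - x c)‖ ≤ ∫ t in c..d, L * (t - c) :=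
        intervalIntegral.norm_integral_le_of_norm_le hcd
          (Filter.Eventually.of_forall fun t ht => hL t (Ioc_subset_Icc_self ht))
          ((by fun_prop : Continuous fun t => L * (t - c)).intervalIntegrable _ _)
    _ = L * (d - c) ^ 2 / 2 := by
        rw [intervalIntegral.integral_comp_sub_right (fun t => L * t),
          intervalIntegral.integral_const_mul, integral_id]
        ring

lemma le_mul_one_add_pow_sub_one {e : ℕ → ℝ} {k c : ℝ} {N : ℕ} (hk : 0 ≤ 1 + k) (h0 : e 0 ≤ 0)
    (hstep : ∀ j < N, e (j + 1) ≤ (1 + k) * e j + k * c) : e N ≤ c * ((1 + k) ^ N - 1) := by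
  suffices ∀ j ≤ N, e j ≤ c * ((1 + k) ^ j - 1) from this N le_rfl
  intro j hj
  induction j with
  | zero => simpa using h0
  | succ j ih =>
    calc e (j + 1) ≤ (1 + k) * e j + k * c := hstep j hj
      _ ≤ (1 + k) * (c * ((1 + k) ^ j - 1)) + k * c := by gcongr; exact ih (by omega)
      _ = c * ((1 + k) ^ (j + 1) - 1) := by ring

section LinearODE

variable {E F : Type*} [NormedAddCommGroup E] [NormedSpace ℝ E]
  [NormedAddCommGroup F] [NormedSpace ℝ F]
  (A : E →L[ℝ] E) (B : F →L[ℝ] E) {x : ℝ → E} {u : ℝ → F}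

lemma norm_linearODE_deriv_le {τ U : ℝ}
    (hode : ∀ t ∈ Icc 0 τ, HasDerivAt x (A (x t) + B (u t)) t)
    (hU : ∀ s ∈ Ico 0 τ, ‖u s‖ ≤ U) :
    ∀ s ∈ Ico 0 τ, ‖A (x s) + B (u s)‖ ≤ (‖A‖ * ‖x 0‖ + ‖B‖ * U) * exp (‖A‖ * s) := by
  have hderiv : ∀ s ∈ Ico 0 τ, ‖A (x s) + B (u s)‖ ≤ ‖A‖ * ‖x s‖ + ‖B‖ * U := fun s hs =>
    (norm_add_le _ _).trans <| add_le_add (A.le_opNorm _) <|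
      (B.le_opNorm _).trans (mul_le_mul_of_nonneg_left (hU s hs) (norm_nonneg B))
  have hgronwall := norm_le_gronwallBound_of_norm_deriv_right_le
    (fun t ht => (hode t ht).continuousAt.continuousWithinAt)
    (fun t ht => (hode t (Ico_subset_Icc_self ht)).hasDerivWithinAt) le_rfl hderiv
  intro s hs
  calc ‖A (x s) + B (u s)‖ ≤ ‖A‖ * ‖x s‖ + ‖B‖ * U := hderiv s hs
    _ ≤ ‖A‖ * gronwallBound ‖x 0‖ ‖A‖ (‖B‖ * U) s + ‖B‖ * U := by
        gcongr
        simpa using hgronwall s (Ico_subset_Icc_self hs)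
    _ = _ := mul_gronwallBound_add _ _ _ _

variable [CompleteSpace E] [CompleteSpace F]

lemma linearODE_eq_eulerStep_add {c d : ℝ} (hcd : c ≤ d)
    (hode : ∀ t ∈ Icc c d, HasDerivAt x (A (x t) + B (u t)) t)
    (hu : IntervalIntegrable u volume c d) :
    x d = x c + (d - c) • A (x c) + B (∫ s in c..d, u s) + A (∫ s in c..d, (x s - x c)) := by
  have hxc : ContinuousOn x (uIcc c d) :=
    HasDerivAt.continuousOn fun t ht => hode t (uIcc_of_le hcd ▸ ht)
  have hx : IntervalIntegrable x volume c d := hxc.intervalIntegrable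
  have hAx : IntervalIntegrable (fun s => A (x s)) volume c d :=
    (A.continuous.comp_continuousOn hxc).intervalIntegrable
  have hBu : IntervalIntegrable (fun s => B (u s)) volume c d :=
    intervalIntegrable_iff.2 (B.integrable_comp (intervalIntegrable_iff.1 hu))
  have hFTC := intervalIntegral.integral_eq_sub_of_hasDerivAt
    (fun t ht => hode t (uIcc_of_le hcd ▸ ht)) (hAx.add hBu)
  rw [intervalIntegral.integral_add hAx hBu, A.intervalIntegral_comp_comm hx,
    B.intervalIntegral_comp_comm hu] at hFTC
  rw [intervalIntegral.integral_sub hx intervalIntegrable_const, intervalIntegral.integral_const,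
    map_sub, map_smul, eq_sub_of_add_eq hFTC]
  abel

lemma norm_eulerStep_sub_le {c d L : ℝ} (hcd : c ≤ d)
    (hode : ∀ t ∈ Icc c d, HasDerivAt x (A (x t) + B (u t)) t)
    (hu : IntervalIntegrable u volume c d) (hL : ∀ t ∈ Icc c d, ‖x t - x c‖ ≤ L * (t - c))
    (y : E) :
    ‖y + (d - c) • A y + B (∫ s in c..d, u s) - x d‖ ≤
      (1 + (d - c) * ‖A‖) * ‖y - x c‖ + (d - c) * ‖A‖ * (L * (d - c) / 2) := by
  have hsplit : y + (d - c) • A y + B (∫ s in c..d, u s) - x d =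
      (y - x c) + (d - c) • A (y - x c) - A (∫ s in c..d, (x s - x c)) := by
    rw [linearODE_eq_eulerStep_add A B hcd hode hu, map_sub, smul_sub]
    abel
  rw [hsplit]
  calc _ ≤ ‖y - x c‖ + (d - c) * (‖A‖ * ‖y - x c‖) + ‖A‖ * (L * (d - c) ^ 2 / 2) := by
        refine (norm_sub_le _ _).trans (add_le_add ((norm_add_le _ _).trans ?_) ?_)
        · rw [norm_smul, Real.norm_of_nonneg (sub_nonneg.2 hcd)]
          gcongr
          exact A.le_opNorm _
        · exact (A.le_opNorm _).trans
            (mul_le_mul_of_nonneg_left (norm_integral_sub_le_of_norm_sub_le hcd hL) (norm_nonneg A))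
    _ = _ := by ring

lemma norm_eulerIterate_sub_le {τ h L : ℝ} {N : ℕ} (hh : 0 ≤ h) (hNh : N * h = τ)
    (hode : ∀ t ∈ Icc 0 τ, HasDerivAt x (A (x t) + B (u t)) t) (hu : IntegrableOn u (Icc 0 τ))
    (hL : ∀ c ≥ 0, ∀ t ∈ Icc c τ, ‖x t - x c‖ ≤ L * (t - c))
    {xs : ℕ → E} (hxs0 : xs 0 = x 0)
    (hxsrec : ∀ j < N, xs (j + 1) = xs j + h • A (xs j) +
      B (∫ s in ((j : ℝ) * h)..(((j : ℝ) + 1) * h), u s)) :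
    ‖xs N - x τ‖ ≤ L * h / 2 * ((1 + h * ‖A‖) ^ N - 1) := by
  have hstep : ∀ j < N, ‖xs (j + 1) - x ((j + 1 : ℕ) * h)‖ ≤
      (1 + h * ‖A‖) * ‖xs j - x (j * h)‖ + h * ‖A‖ * (L * h / 2) := by
    intro j hj
    have hjτ : ((j : ℝ) + 1) * h ≤ τ := hNh ▸ by gcongr; exact_mod_cast hj
    have hjj : (j : ℝ) * h ≤ ((j : ℝ) + 1) * h := by nlinarith
    have hj0 : 0 ≤ (j : ℝ) * h := by positivity
    have huj : IntervalIntegrable u volume (j * h) ((j + 1) * h) :=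
      (hu.mono_set (uIcc_of_le hjj ▸ Icc_subset_Icc hj0 hjτ)).intervalIntegrable
    have := norm_eulerStep_sub_le A B hjj (fun t ht => hode t ⟨hj0.trans ht.1, ht.2.trans hjτ⟩)
      huj (fun t ht => hL _ hj0 t ⟨ht.1, ht.2.trans hjτ⟩) (xs j)
    rw [show ((j : ℝ) + 1) * h - j * h = h by ring] at this
    push_cast
    rwa [hxsrec j hj]
  simpa only [hNh] using le_mul_one_add_pow_sub_one (e := fun j => ‖xs j - x (j * h)‖)
    (by positivity) (by simp [hxs0]) hstep

end LinearODE

theorem stmt_2_general {n m : ℕ} (τ : ℝ) (hτ : 0 < τ) (N : ℕ) (hN : 1 ≤ N)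
    (h : ℝ) (hhN : h = τ / N)
    (A : EuclideanSpace ℝ (Fin n) →L[ℝ] EuclideanSpace ℝ (Fin n))
    (B : EuclideanSpace ℝ (Fin m) →L[ℝ] EuclideanSpace ℝ (Fin n))
    (u : ℝ → EuclideanSpace ℝ (Fin m))
    (huint : MeasureTheory.IntegrableOn u (Set.Icc (0:ℝ) τ))
    (U : ℝ) (hU : ∀ s ∈ Set.Ico (0:ℝ) τ, ‖u s‖ ≤ U)
    (x : ℝ → EuclideanSpace ℝ (Fin n))
    (hode : ∀ t ∈ Set.Icc (0:ℝ) τ, HasDerivAt x (A (x t) + B (u t)) t)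
    (xs : ℕ → EuclideanSpace ℝ (Fin n)) (hxs0 : xs 0 = x 0)
    (hxsrec : ∀ j < N,
      xs (j + 1) = xs j + h • A (xs j) +
        B (∫ s in ((j : ℝ) * h)..(((j : ℝ) + 1) * h), u s)) :
    ‖xs N - x τ‖ ≤
      h / 2 * ‖A‖ * (Real.exp (‖A‖ * τ) - 1) * Real.exp (‖A‖ * τ) * ‖x 0‖ +
      h / 2 * ‖B‖ * (‖A‖ * τ * Real.exp (‖A‖ * τ) + 1) *
        (Real.exp (‖A‖ * τ) - 1) * U := by
  have hh : 0 ≤ h := hhN ▸ by positivity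
  have hNh : N * h = τ := by rw [hhN]; field_simp [(Nat.cast_pos.2 hN).ne']
  have hU0 : 0 ≤ U := (norm_nonneg _).trans (hU 0 ⟨le_rfl, hτ⟩)
  set L := (‖A‖ * ‖x 0‖ + ‖B‖ * U) * exp (‖A‖ * τ) with hL
  have hderiv : ∀ s ∈ Ico 0 τ, ‖A (x s) + B (u s)‖ ≤ L := fun s hs =>
    (norm_linearODE_deriv_le A B hode hU s hs).trans <| mul_le_mul_of_nonneg_left
      (exp_le_exp.2 (by gcongr; exact hs.2.le)) (by positivity)
  have hlip : ∀ c ≥ 0, ∀ t ∈ Icc c τ, ‖x t - x c‖ ≤ L * (t - c) := fun c hc =>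
    norm_image_sub_le_of_norm_deriv_le_segment'
      (fun t ht => (hode t ⟨hc.trans ht.1, ht.2⟩).hasDerivWithinAt)
      (fun t ht => hderiv t ⟨hc.trans ht.1, ht.2⟩)
  have hpow : (1 + h * ‖A‖) ^ N ≤ exp (‖A‖ * τ) :=
    (one_add_pow_le_exp_mul (by positivity) N).trans_eq (by rw [← hNh]; ring_nf)
  have hE1 : 0 ≤ exp (‖A‖ * τ) - 1 := by linarith [one_le_exp (by positivity : 0 ≤ ‖A‖ * τ)]
  have hE : 0 ≤ ‖A‖ * τ * exp (‖A‖ * τ) + 1 - exp (‖A‖ * τ) := by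
    linarith [exp_le_mul_exp_add_one (‖A‖ * τ)]
  calc ‖xs N - x τ‖ ≤ L * h / 2 * ((1 + h * ‖A‖) ^ N - 1) :=
        norm_eulerIterate_sub_le A B hh hNh hode huint hlip hxs0 hxsrec
    _ ≤ L * h / 2 * (exp (‖A‖ * τ) - 1) := by gcongr
    _ ≤ _ := by
        rw [hL]
        have hUterm : 0 ≤ h / 2 * ‖B‖ * U * (exp (‖A‖ * τ) - 1) := by positivity
        linear_combination mul_nonneg hUterm hE

theorem stmt_2 {n m : ℕ} (τ : ℝ) (hτ : 0 < τ) (N : ℕ) (hN : 1 ≤ N)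
    (h : ℝ) (hhN : h = τ / N)
    (A : EuclideanSpace ℝ (Fin n) →L[ℝ] EuclideanSpace ℝ (Fin n))
    (B : EuclideanSpace ℝ (Fin m) →L[ℝ] EuclideanSpace ℝ (Fin n))
    (u : ℝ → EuclideanSpace ℝ (Fin m)) (hu : Measurable u)
    (huint : MeasureTheory.IntegrableOn u (Set.Icc (0:ℝ) τ))
    (U : ℝ) (hU : ∀ s ∈ Set.Ico (0:ℝ) τ, ‖u s‖ ≤ U)
    (x : ℝ → EuclideanSpace ℝ (Fin n))
    (hode : ∀ t ∈ Set.Icc (0:ℝ) τ, HasDerivAt x (A (x t) + B (u t)) t)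
    (xs : ℕ → EuclideanSpace ℝ (Fin n)) (hxs0 : xs 0 = x 0)
    (hxsrec : ∀ j < N,
      xs (j + 1) = xs j + h • A (xs j) +
        B (∫ s in ((j : ℝ) * h)..(((j : ℝ) + 1) * h), u s)) :
    ‖xs N - x τ‖ ≤
      h / 2 * ‖A‖ * (Real.exp (‖A‖ * τ) - 1) * Real.exp (‖A‖ * τ) * ‖x 0‖ +
      h / 2 * ‖B‖ * (‖A‖ * τ * Real.exp (‖A‖ * τ) + 1) *
        (Real.exp (‖A‖ * τ) - 1) * U :=
  stmt_2_general τ hτ N hN h hhN A B u huint U hU x hode xs hxs0 hxsrec
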